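/- arXiv:2209.11010 — 3 statements merged into one kernel-verified Lean document; each statement's English description precedes it below -/
import Mathlib

section
/- In any single change covering design SCCD(v,k,b) with 2 ≤ k ≤ v, the number of blocks satisfies b ≥ (C(v,2) − C(k,2))/(k−1) + 1, where C(n,2) = n(n−1)/2. -/
/-- A single change covering design `SCCD(v,k,b)`: a ground set `X` of size `v`
together with blocks `B 0, …, B (b-1)`, each a `k`-subset of `X`, such that
consecutive blocks share exactly `k-1` elements and every pair of distinct
elements of `X` occurs together in some block. -/
structure SCCD (v k b : ℕ) where
  X : Finset ℕ
  B : ℕ → Finset ℕ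
  cardX : X.card = v
  cardB : ∀ i, i < b → (B i).card = k
  subX : ∀ i, i < b → B i ⊆ X
  singleChange : ∀ i, i + 1 < b → (B i ∩ B (i + 1)).card = k - 1
  covers : ∀ x ∈ X, ∀ y ∈ X, x ≠ y → ∃ i, i < b ∧ x ∈ B i ∧ y ∈ B i

/-- A circular single change covering design: additionally the last and first
blocks share exactly `k-1` elements. -/
structure CSCCD (v k b : ℕ) extends SCCD v k b where
  circ : 0 < b → (toSCCD.B (b - 1) ∩ toSCCD.B 0).card = k - 1

/-- `g₁(v,k) = (C(v,2) − C(k,2))/(k−1) + 1`, the linear lower bound. -/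
def g1 (v k : ℕ) : ℚ := ((v.choose 2 : ℚ) - (k.choose 2 : ℚ)) / ((k : ℚ) - 1) + 1

/-- `g₂(v,k) = C(v,2)/(k−1)`, the circular lower bound. -/
def g2 (v k : ℕ) : ℚ := (v.choose 2 : ℚ) / ((k : ℚ) - 1)

/-- The excess of a (linear) `SCCD(v,k,b)`: `e = (k−1)b + C(k−1,2) − C(v,2)`. -/
def linExcess (v k b : ℕ) : ℤ :=
  ((k - 1 : ℕ) : ℤ) * b + ((k - 1).choose 2 : ℤ) - (v.choose 2 : ℤ)

/-- The excess of a circular `CSCCD(v,k,b)`: `e = (k−1)b − C(v,2)`. -/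
def circExcess (v k b : ℕ) : ℤ :=
  ((k - 1 : ℕ) : ℤ) * b - (v.choose 2 : ℤ)

/-- An `SCCD(v,k,b)` is economical when `b = ⌈g₁(v,k)⌉`. -/
def EconomicalLin (v k b : ℕ) : Prop := (b : ℤ) = ⌈g1 v k⌉

/-- An `SCCD(v,k,b)` is tight when `b = g₁(v,k)` (in particular `g₁` is an integer). -/
def TightLin (v k b : ℕ) : Prop := (b : ℚ) = g1 v k

/-- A `CSCCD(v,k,b)` is economical when `b = ⌈g₂(v,k)⌉`. -/
def EconomicalCirc (v k b : ℕ) : Prop := (b : ℤ) = ⌈g2 v k⌉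

/-- A `CSCCD(v,k,b)` is tight when `b = g₂(v,k)` (in particular `g₂` is an integer). -/
def TightCirc (v k b : ℕ) : Prop := (b : ℚ) = g2 v k

namespace SCCD

variable {v k b : ℕ}

/-- The set of elements introduced in block `i`: all of `B 0` for `i = 0`,
and `B i \ B (i-1)` otherwise. -/
def introduced (D : SCCD v k b) (i : ℕ) : Finset ℕ :=
  if i = 0 then D.B 0 else D.B i \ D.B (i - 1)

/-- The pair `s` is covered on block `i`. -/
def coveredOn (D : SCCD v k b) (i : ℕ) (s : Finset ℕ) : Prop :=
  i < b ∧ s.card = 2 ∧ s ⊆ D.B i ∧ (s ∩ D.introduced i).Nonempty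

/-- The excess of block `i`: the number of pairs covered on `B i` that are also
covered on some earlier block. -/
noncomputable def blockExcess (D : SCCD v k b) (i : ℕ) : ℕ :=
  {s : Finset ℕ | D.coveredOn i s ∧ ∃ j < i, D.coveredOn j s}.ncard

/-- Block `i` is tight: no pair covered on it is covered on any other block. -/
def TightBlock (D : SCCD v k b) (i : ℕ) : Prop :=
  ∀ s, D.coveredOn i s → ∀ j, j < b → j ≠ i → ¬ D.coveredOn j s

/-- `S` is an inner unchanged subset, i.e. the intersection of two
consecutive blocks. -/
def IsInnerUnchanged (D : SCCD v k b) (S : Finset ℕ) : Prop :=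
  ∃ i, i + 1 < b ∧ S = D.B i ∩ D.B (i + 1)

/-- `S` may serve as the outer unchanged subset `U₀`: a `(k−1)`-subset of the
first block. -/
def IsU0 (D : SCCD v k b) (S : Finset ℕ) : Prop :=
  0 < b ∧ S ⊆ D.B 0 ∧ S.card = k - 1

/-- `S` may serve as the outer unchanged subset `U_b`: a `(k−1)`-subset of the
last block. -/
def IsUb (D : SCCD v k b) (S : Finset ℕ) : Prop :=
  0 < b ∧ S ⊆ D.B (b - 1) ∧ S.card = k - 1

/-- `S` is an unchanged subset (inner, or one of the outer choices). -/
def IsUnchanged (D : SCCD v k b) (S : Finset ℕ) : Prop :=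
  D.IsInnerUnchanged S ∨ D.IsU0 S ∨ D.IsUb S

/-- `E` is an expansion set: `v/(k−1)` pairwise disjoint unchanged subsets
whose union is `X`. -/
def IsExpansionSet (D : SCCD v k b) (E : Finset (Finset ℕ)) : Prop :=
  E.card = v / (k - 1) ∧ (∀ S ∈ E, D.IsUnchanged S) ∧
  (E : Set (Finset ℕ)).Pairwise Disjoint ∧ E.sup id = D.X

/-- `E` is an outer expansion set: it contains `U₀` or `U_b`. -/
def IsOuterExpansionSet (D : SCCD v k b) (E : Finset (Finset ℕ)) : Prop :=
  D.IsExpansionSet E ∧ ((∃ S ∈ E, D.IsU0 S) ∨ (∃ S ∈ E, D.IsUb S))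

/-- `E` is an outer expansion set containing both `U₀` and `U_b`. -/
def IsDoubleOuterExpansionSet (D : SCCD v k b) (E : Finset (Finset ℕ)) : Prop :=
  D.IsExpansionSet E ∧ (∃ S ∈ E, D.IsU0 S) ∧ (∃ S ∈ E, D.IsUb S)

/-- `E` is a disjoint-capable outer expansion set: it contains both `U₀` and
`U_b`, `U₀ = U₁ = ⋯ = U_{k−1}`, and `U_b = ⋃_{i=1}^{k−1} (B_i \ B_{i+1})`
(written here with blocks indexed from `0`). -/
def IsDisjointCapable (D : SCCD v k b) (E : Finset (Finset ℕ)) : Prop :=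
  D.IsExpansionSet E ∧ k ≤ b ∧
  ∃ S0 ∈ E, ∃ Sb ∈ E, D.IsU0 S0 ∧ D.IsUb Sb ∧
    (∀ i, i < k - 1 → S0 = D.B i ∩ D.B (i + 1)) ∧
    Sb = (Finset.range (k - 1)).biUnion (fun i => D.B i \ D.B (i + 1))

end SCCD

namespace CSCCD

variable {v k b : ℕ}

/-- `S` is an unchanged subset of a circular design (indices taken mod `b`). -/
def IsUnchanged (D : CSCCD v k b) (S : Finset ℕ) : Prop :=
  (∃ i, i + 1 < b ∧ S = D.toSCCD.B i ∩ D.toSCCD.B (i + 1)) ∨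
  (0 < b ∧ S = D.toSCCD.B (b - 1) ∩ D.toSCCD.B 0)

/-- `E` is an expansion set of a circular design. -/
def IsExpansionSet (D : CSCCD v k b) (E : Finset (Finset ℕ)) : Prop :=
  E.card = v / (k - 1) ∧ (∀ S ∈ E, D.IsUnchanged S) ∧
  (E : Set (Finset ℕ)).Pairwise Disjoint ∧ E.sup id = D.toSCCD.X

end CSCCD

/-!
Every pair of points lies in some block, so the pairs of `X` are covered by the pairs of the
blocks. The first block contributes `C(k,2)` pairs, and since `B (i+1)` shares `k-1` points
with `B i`, each further block contributes at most `C(k,2) - C(k-1,2) = k-1` new pairs.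
Hence `C(v,2) ≤ C(k,2) + (b-1)(k-1)`.
-/

namespace Finset

variable {α : Type*} [DecidableEq α]

theorem powersetCard_inter_powersetCard (n : ℕ) (s t : Finset α) :
    s.powersetCard n ∩ t.powersetCard n = (s ∩ t).powersetCard n := by
  ext u
  simp only [mem_inter, mem_powersetCard, subset_inter_iff]
  tauto

theorem card_powersetCard_sdiff_powersetCard (n : ℕ) (s t : Finset α) :
    #(t.powersetCard n \ s.powersetCard n) = (#t).choose n - (#(s ∩ t)).choose n := by
  rw [card_sdiff, powersetCard_inter_powersetCard, card_powersetCard, card_powersetCard]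

theorem card_biUnion_range_succ_le (F : ℕ → Finset α) (n d : ℕ)
    (h : ∀ i < n, #(F (i + 1) \ F i) ≤ d) :
    #((range (n + 1)).biUnion F) ≤ #(F 0) + n * d := by
  induction n with
  | zero => simp
  | succ n ih =>
    set U := (range (n + 1)).biUnion F
    have hFn : F n ⊆ U := subset_biUnion_of_mem F (self_mem_range_succ n)
    have hnew : #(F (n + 1) \ U) ≤ d :=
      (card_le_card (sdiff_subset_sdiff subset_rfl hFn)).trans (h n n.lt_succ_self)
    calc #((range (n + 1 + 1)).biUnion F) = #(F (n + 1) \ U) + #U := by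
          rw [range_add_one, biUnion_insert, card_sdiff_add_card]
      _ ≤ d + (#(F 0) + n * d) :=
          add_le_add hnew (ih fun i hi => h i (hi.trans n.lt_succ_self))
      _ = #(F 0) + (n + 1) * d := by ring

end Finset

theorem Nat.choose_two_sub_choose_two_pred (k : ℕ) : k.choose 2 - (k - 1).choose 2 = k - 1 := by
  cases k with
  | zero => rfl
  | succ k =>
    rw [Nat.choose_succ_succ', Nat.choose_one_right, Nat.add_sub_cancel, Nat.add_sub_cancel]

namespace SCCD

open Finset

variable {v k b : ℕ}

theorem pos_of_one_lt (D : SCCD v k b) (hv : 1 < v) : 0 < b := by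
  obtain ⟨x, hx, y, hy, hxy⟩ := one_lt_card.mp (D.cardX ▸ hv)
  obtain ⟨i, hi, -, -⟩ := D.covers x hx y hy hxy
  exact i.zero_le.trans_lt hi

theorem powersetCard_two_subset_biUnion (D : SCCD v k b) :
    D.X.powersetCard 2 ⊆ (range b).biUnion fun i => (D.B i).powersetCard 2 := by
  intro s hs
  obtain ⟨hsX, hs2⟩ := mem_powersetCard.mp hs
  obtain ⟨x, y, hxy, rfl⟩ := card_eq_two.mp hs2
  obtain ⟨i, hi, hx, hy⟩ :=
    D.covers x (hsX (mem_insert_self x {y})) y (hsX (mem_insert_of_mem (mem_singleton_self y))) hxy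
  exact mem_biUnion.mpr ⟨i, mem_range.mpr hi,
    mem_powersetCard.mpr ⟨insert_subset hx (singleton_subset_iff.mpr hy), hs2⟩⟩

theorem card_powersetCard_two_succ_sdiff (D : SCCD v k b) {i : ℕ} (hi : i + 1 < b) :
    #((D.B (i + 1)).powersetCard 2 \ (D.B i).powersetCard 2) = k - 1 := by
  rw [card_powersetCard_sdiff_powersetCard, D.cardB (i + 1) hi, D.singleChange i hi,
    Nat.choose_two_sub_choose_two_pred]

theorem choose_two_le (D : SCCD v k b) (hb : 0 < b) :
    v.choose 2 ≤ k.choose 2 + (b - 1) * (k - 1) := by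
  obtain ⟨n, rfl⟩ : ∃ n, b = n + 1 := ⟨b - 1, by omega⟩
  calc v.choose 2 = #(D.X.powersetCard 2) := by rw [card_powersetCard, D.cardX]
    _ ≤ #((range (n + 1)).biUnion fun i => (D.B i).powersetCard 2) :=
        card_le_card D.powersetCard_two_subset_biUnion
    _ ≤ #((D.B 0).powersetCard 2) + n * (k - 1) :=
        card_biUnion_range_succ_le _ n _ fun _ hi =>
          (D.card_powersetCard_two_succ_sdiff (by omega)).le
    _ = k.choose 2 + (n + 1 - 1) * (k - 1) := by
        rw [card_powersetCard, D.cardB 0 hb, Nat.add_sub_cancel]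

end SCCD

/-- In any `SCCD(v,k,b)` with `2 ≤ k ≤ v`, we have
`b ≥ (C(v,2) − C(k,2))/(k−1) + 1`. -/
theorem stmt0 (v k b : ℕ) (hk : 2 ≤ k) (hkv : k ≤ v) (D : SCCD v k b) :
    (b : ℚ) ≥ ((v.choose 2 : ℚ) - (k.choose 2 : ℚ)) / ((k : ℚ) - 1) + 1 := by
  have hb : 1 ≤ b := D.pos_of_one_lt (by omega)
  have hcount := D.choose_two_le hb
  qify [hb, (by omega : 1 ≤ k)] at hcount hk
  have hk1 : (0 : ℚ) < (k : ℚ) - 1 := by linarith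
  rw [ge_iff_le, ← le_sub_iff_add_le, div_le_iff₀ hk1]
  linarith
end

section
/- If there exists an SCCD(v,k,b) possessing an expansion set (in particular (k−1) divides v), then there exists an SCCD(v+1, k, b + v/(k−1)). Moreover, if the given SCCD(v,k,b) is tight, then the resulting SCCD(v+1, k, b + v/(k−1)) is tight. -/
/-!
Adjoin a new point `z`. Each member `S` of the expansion set is an unchanged subset, so it lies
in the block(s) next to some slot of the list of blocks; insert the block `S ∪ {z}` into that
slot. Consecutive blocks still meet in `k - 1` points: an inserted block meets its old
neighbours in `S`, and two blocks inserted into the same slot come from disjoint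
`(k - 1)`-subsets of one `k`-block, which forces `k = 2`, so they meet in `{z}`. Old pairs stay
covered, and a pair `{z, y}` is covered by the block built from the `S ∋ y`. This adds
`|E| = v / (k - 1)` blocks, and `g₁(v + 1, k) = g₁(v, k) + v / (k - 1)` carries tightness over.
-/

/-- `weave a ins n = ins 0 ++ a 0 :: ins 1 ++ ⋯ ++ a (n - 1) :: ins n`. -/
def weave {α : Type*} (a : ℕ → α) (ins : ℕ → List α) : ℕ → List α
  | 0 => ins 0
  | n + 1 => weave a ins n ++ a n :: ins (n + 1)

section Weave

variable {α : Type*} {a : ℕ → α} {ins : ℕ → List α} {n : ℕ}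

theorem length_weave (a : ℕ → α) (ins : ℕ → List α) (n : ℕ) :
    (weave a ins n).length = n + ∑ q ∈ Finset.range (n + 1), (ins q).length := by
  induction n with
  | zero => simp [weave]
  | succ n ih =>
    rw [weave, List.length_append, List.length_cons, ih, Finset.sum_range_succ _ (n + 1)]
    ring

theorem mem_weave {x : α} :
    x ∈ weave a ins n ↔ (∃ q < n, a q = x) ∨ ∃ q ≤ n, x ∈ ins q := by
  induction n with
  | zero => simp [weave]
  | succ n ih =>
    simp only [weave, List.mem_append, List.mem_cons, ih, Nat.lt_succ_iff_lt_or_eq,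
      Nat.le_succ_iff, or_and_right, exists_or, exists_eq_left, @eq_comm _ x (a n),
      Nat.succ_eq_add_one, or_assoc, or_left_comm]

theorem isChain_weave {R : α → α → Prop}
    (ha : ∀ q, q + 1 < n → R (a q) (a (q + 1)))
    (hins : ∀ q ≤ n, (ins q).IsChain R)
    (hleft : ∀ q < n, ∀ x ∈ ins (q + 1), R (a q) x)
    (hright : ∀ q < n, ∀ x ∈ ins q, R x (a q)) :
    (weave a ins n).IsChain R := by
  suffices h : ∀ m ≤ n, (weave a ins m).IsChain R ∧
      (m < n → ∀ x ∈ (weave a ins m).getLast?, R x (a m)) from (h n le_rfl).1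
  intro m hm
  induction m with
  | zero =>
    exact ⟨hins 0 hm, fun h x hx => hright 0 h x (List.mem_of_mem_getLast? hx)⟩
  | succ m ih =>
    obtain ⟨ih_chain, ih_last⟩ := ih (by omega)
    have hcons : (a m :: ins (m + 1)).IsChain R :=
      (hins _ hm).cons fun y hy => hleft m (by omega) y (List.mem_of_mem_head? hy)
    refine ⟨List.isChain_append.2 ⟨ih_chain, hcons, fun x hx y hy => ?_⟩, fun h x hx => ?_⟩
    · obtain rfl : a m = y := by simpa using hy
      exact ih_last (by omega) x hx
    · rw [weave, List.getLast?_append_cons] at hx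
      rcases List.mem_cons.1 (List.mem_of_mem_getLast? hx) with rfl | hx
      · exact ha m h
      · exact hright (m + 1) h x hx

end Weave

theorem Finset.card_insert_inter_insert_of_disjoint {α : Type*} [DecidableEq α] {k : ℕ}
    {A S S' : Finset α} (z : α) (hS : S ⊆ A) (hS' : S' ⊆ A) (hA : A.card = k)
    (hcS : S.card = k - 1) (hcS' : S'.card = k - 1) (hdisj : Disjoint S S') (hne : S ≠ S') :
    (insert z S ∩ insert z S').card = k - 1 := by
  have hunion : S.card + S'.card ≤ k :=
    hA ▸ Finset.card_union_of_disjoint hdisj ▸ Finset.card_le_card (Finset.union_subset hS hS')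
  have hk : k - 1 ≠ 0 := by
    rintro h0
    rw [h0, Finset.card_eq_zero] at hcS hcS'
    exact hne (hcS.trans hcS'.symm)
  rw [← Finset.insert_inter_distrib, Finset.disjoint_iff_inter_eq_empty.1 hdisj]
  simp only [insert_empty_eq, Finset.card_singleton]
  omega

theorem g1_succ (v k : ℕ) : g1 (v + 1) k = g1 v k + v / ((k : ℚ) - 1) := by
  simp only [g1, Nat.choose_succ_succ' v 1, Nat.choose_one_right]
  push_cast
  ring

theorem TightLin.succ {v k b : ℕ} (hdvd : (k - 1) ∣ v) (h : TightLin v k b) :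
    TightLin (v + 1) k (b + v / (k - 1)) := by
  have hcast : ((v / (k - 1) : ℕ) : ℚ) = v / ((k : ℚ) - 1) := by
    rcases k with _ | k
    · simp [Nat.eq_zero_of_zero_dvd hdvd]
    · rw [Nat.cast_div_charZero hdvd]
      push_cast
      ring
  rw [TightLin, g1_succ, ← h, Nat.cast_add, hcast]

namespace SCCD

variable {v k b : ℕ}

def ofList (X : Finset ℕ) (L : List (Finset ℕ)) (hX : X.card = v) (hL : L.length = b)
    (hcard : ∀ T ∈ L, T.card = k) (hsub : ∀ T ∈ L, T ⊆ X)
    (hchain : L.IsChain fun A B => (A ∩ B).card = k - 1)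
    (hcov : ∀ x ∈ X, ∀ y ∈ X, x ≠ y → ∃ T ∈ L, x ∈ T ∧ y ∈ T) : SCCD v k b where
  X := X
  B i := L.getD i ∅
  cardX := hX
  cardB i hi := by
    subst hL
    rw [L.getD_eq_getElem _ hi]
    exact hcard _ (L.getElem_mem hi)
  subX i hi := by
    subst hL
    rw [L.getD_eq_getElem _ hi]
    exact hsub _ (L.getElem_mem hi)
  singleChange i hi := by
    subst hL
    rw [L.getD_eq_getElem _ (by omega), L.getD_eq_getElem _ hi]
    exact List.isChain_iff_getElem.1 hchain i hi
  covers x hx y hy hxy := by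
    obtain ⟨T, hT, hxT, hyT⟩ := hcov x hx y hy hxy
    obtain ⟨i, hi, rfl⟩ := List.mem_iff_getElem.1 hT
    refine ⟨i, hL ▸ hi, ?_, ?_⟩ <;> rwa [L.getD_eq_getElem _ hi]

theorem IsUnchanged.card_eq {D : SCCD v k b} {S : Finset ℕ} (h : D.IsUnchanged S) :
    S.card = k - 1 := by
  rcases h with ⟨i, hi, rfl⟩ | ⟨-, -, h⟩ | ⟨-, -, h⟩
  exacts [D.singleChange i hi, h, h]

theorem IsExpansionSet.card_add_one {D : SCCD v k b} {E : Finset (Finset ℕ)}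
    (hE : D.IsExpansionSet E) {S : Finset ℕ} (hS : S ∈ E) : S.card + 1 = k := by
  have hk : k - 1 ≠ 0 := by
    intro hk
    have hE0 : E.card = 0 := by rw [hE.1, hk, Nat.div_zero]
    simp [Finset.card_eq_zero.1 hE0] at hS
  have := (hE.2.1 S hS).card_eq
  omega

/-- `S` fits between `B (p - 1)` and `B p`: before `B 0` if `p = 0`, after the last block if
`p = b`. -/
def IsSlot (D : SCCD v k b) (S : Finset ℕ) (p : ℕ) : Prop :=
  0 < b ∧ p ≤ b ∧ (p < b → S ⊆ D.B p) ∧ ∀ q, p = q + 1 → S ⊆ D.B q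

theorem IsUnchanged.exists_isSlot {D : SCCD v k b} {S : Finset ℕ} (h : D.IsUnchanged S) :
    ∃ p, D.IsSlot S p := by
  rcases h with ⟨i, hi, rfl⟩ | ⟨hb, hsub, -⟩ | ⟨hb, hsub, -⟩
  · refine ⟨i + 1, by omega, by omega, fun _ => Finset.inter_subset_right, ?_⟩
    rintro q ⟨⟩
    exact Finset.inter_subset_left
  · exact ⟨0, hb, by omega, fun _ => hsub, fun q hq => by omega⟩
  · refine ⟨b, hb, le_rfl, fun h => absurd h (lt_irrefl b), fun q hq => ?_⟩
    rwa [show q = b - 1 by omega]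

theorem IsSlot.subset_B_min {D : SCCD v k b} {S : Finset ℕ} {p : ℕ} (h : D.IsSlot S p) :
    S ⊆ D.B (min p (b - 1)) := by
  obtain ⟨hb, hpb, hright, hleft⟩ := h
  rcases Nat.lt_or_ge p b with hp | hp
  · rw [min_eq_left (by omega)]
    exact hright hp
  · rw [min_eq_right (by omega)]
    exact hleft (b - 1) (by omega)

section Expand

variable (D : SCCD v k b) (E : Finset (Finset ℕ)) (z : ℕ) (pos : Finset ℕ → ℕ)

noncomputable def insertedAt (p : ℕ) : List (Finset ℕ) :=
  (E.filter fun S => pos S = p).toList.map (insert z)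

noncomputable def expandedBlocks : List (Finset ℕ) :=
  weave D.B (insertedAt E z pos) b

variable {D E z pos}

theorem mem_insertedAt {p : ℕ} {T : Finset ℕ} :
    T ∈ insertedAt E z pos p ↔ ∃ S ∈ E, pos S = p ∧ insert z S = T := by
  simp [insertedAt, and_assoc]

theorem mem_expandedBlocks {T : Finset ℕ} :
    T ∈ expandedBlocks D E z pos ↔
      (∃ q < b, D.B q = T) ∨ ∃ S ∈ E, pos S ≤ b ∧ insert z S = T := by
  simp only [expandedBlocks, mem_weave, mem_insertedAt]
  aesop

theorem length_expandedBlocks (hpos : ∀ S ∈ E, pos S ≤ b) :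
    (expandedBlocks D E z pos).length = b + E.card := by
  classical
  rw [expandedBlocks, length_weave, Finset.card_eq_sum_card_fiberwise
    (t := Finset.range (b + 1)) fun S hS => Finset.mem_range.2 (Nat.lt_succ_of_le (hpos S hS))]
  simp [insertedAt]

theorem isChain_expandedBlocks (hz : z ∉ D.X) (hslot : ∀ S ∈ E, D.IsSlot S (pos S))
    (hcard : ∀ S ∈ E, S.card + 1 = k) (hdisj : (E : Set (Finset ℕ)).Pairwise Disjoint) :
    (expandedBlocks D E z pos).IsChain fun A B => (A ∩ B).card = k - 1 := by
  have hzB : ∀ q < b, z ∉ D.B q := fun q hq h => hz (D.subX q hq h)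
  apply isChain_weave D.singleChange
  · intro p _
    apply List.Pairwise.isChain
    rw [insertedAt, List.pairwise_map]
    refine List.Pairwise.imp_of_mem ?_ (Finset.nodup_toList _)
    intro S S' hS hS' hne
    simp only [Finset.mem_toList, Finset.mem_filter] at hS hS'
    have hb := (hslot S hS.1).1
    have hS'_sub := (hslot S' hS'.1).subset_B_min
    rw [hS'.2, ← hS.2] at hS'_sub
    exact Finset.card_insert_inter_insert_of_disjoint z (hslot S hS.1).subset_B_min hS'_sub
      (D.cardB _ (by omega)) (by have := hcard S hS.1; omega)
      (by have := hcard S' hS'.1; omega) (hdisj hS.1 hS'.1 hne) hne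
  · intro q hq T hT
    obtain ⟨S, hS, hp, rfl⟩ := mem_insertedAt.1 hT
    rw [Finset.inter_insert_of_notMem (hzB q hq),
      Finset.inter_eq_right.2 ((hslot S hS).2.2.2 q hp)]
    have := hcard S hS
    omega
  · intro q hq T hT
    obtain ⟨S, hS, rfl, rfl⟩ := mem_insertedAt.1 hT
    rw [Finset.insert_inter_of_notMem (hzB _ hq), Finset.inter_eq_left.2 ((hslot S hS).2.2.1 hq)]
    have := hcard S hS
    omega

theorem subset_X_of_mem (hunion : E.sup id = D.X) {S : Finset ℕ} (hS : S ∈ E) : S ⊆ D.X :=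
  hunion ▸ Finset.le_sup (f := id) hS

theorem card_of_mem_expandedBlocks (hz : z ∉ D.X) (hcard : ∀ S ∈ E, S.card + 1 = k)
    (hunion : E.sup id = D.X) {T : Finset ℕ} (hT : T ∈ expandedBlocks D E z pos) :
    T.card = k := by
  rcases mem_expandedBlocks.1 hT with ⟨q, hq, rfl⟩ | ⟨S, hS, -, rfl⟩
  · exact D.cardB q hq
  · rw [Finset.card_insert_of_notMem fun h => hz (subset_X_of_mem hunion hS h), hcard S hS]

theorem subset_of_mem_expandedBlocks (hunion : E.sup id = D.X) {T : Finset ℕ}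
    (hT : T ∈ expandedBlocks D E z pos) : T ⊆ insert z D.X := by
  rcases mem_expandedBlocks.1 hT with ⟨q, hq, rfl⟩ | ⟨S, hS, -, rfl⟩
  · exact (D.subX q hq).trans (Finset.subset_insert z D.X)
  · exact Finset.insert_subset_insert z (subset_X_of_mem hunion hS)

theorem covers_expandedBlocks (hslot : ∀ S ∈ E, D.IsSlot S (pos S))
    (hunion : E.sup id = D.X) :
    ∀ x ∈ insert z D.X, ∀ y ∈ insert z D.X, x ≠ y →
      ∃ T ∈ expandedBlocks D E z pos, x ∈ T ∧ y ∈ T := by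
  have hnew : ∀ y ∈ D.X, ∃ T ∈ expandedBlocks D E z pos, z ∈ T ∧ y ∈ T := by
    intro y hy
    rw [← hunion] at hy
    obtain ⟨S, hS, hyS⟩ := Finset.mem_sup.1 hy
    exact ⟨insert z S, mem_expandedBlocks.2 (Or.inr ⟨S, hS, (hslot S hS).2.1, rfl⟩),
      Finset.mem_insert_self z S, Finset.mem_insert_of_mem hyS⟩
  intro x hx y hy hxy
  rcases Finset.mem_insert.1 hx with rfl | hxX <;> rcases Finset.mem_insert.1 hy with rfl | hyX
  · exact absurd rfl hxy
  · exact hnew y hyX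
  · simpa only [and_comm] using hnew x hxX
  · obtain ⟨i, hi, hxi, hyi⟩ := D.covers x hxX y hyX hxy
    exact ⟨D.B i, mem_expandedBlocks.2 (Or.inl ⟨i, hi, rfl⟩), hxi, hyi⟩

noncomputable def expand (hz : z ∉ D.X) (hslot : ∀ S ∈ E, D.IsSlot S (pos S))
    (hcard : ∀ S ∈ E, S.card + 1 = k) (hdisj : (E : Set (Finset ℕ)).Pairwise Disjoint)
    (hunion : E.sup id = D.X) : SCCD (v + 1) k (b + E.card) :=
  ofList (insert z D.X) (expandedBlocks D E z pos)
    (by rw [Finset.card_insert_of_notMem hz, D.cardX])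
    (length_expandedBlocks fun S hS => (hslot S hS).2.1)
    (fun _ => card_of_mem_expandedBlocks hz hcard hunion)
    (fun _ => subset_of_mem_expandedBlocks hunion)
    (isChain_expandedBlocks hz hslot hcard hdisj)
    (covers_expandedBlocks hslot hunion)

end Expand

end SCCD

/-- If an `SCCD(v,k,b)` with an expansion set exists (in particular
`(k−1) ∣ v`), then an `SCCD(v+1, k, b + v/(k−1))` exists; moreover tightness is
preserved. -/
theorem stmt2 (v k b : ℕ) (D : SCCD v k b) (E : Finset (Finset ℕ))
    (hE : D.IsExpansionSet E) (hdvd : (k - 1) ∣ v) :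
    Nonempty (SCCD (v + 1) k (b + v / (k - 1))) ∧
      (TightLin v k b → TightLin (v + 1) k (b + v / (k - 1))) := by
  refine ⟨?_, TightLin.succ hdvd⟩
  have hslot : ∀ S ∈ E, ∃ p, D.IsSlot S p := fun S hS => (hE.2.1 S hS).exists_isSlot
  choose! pos hpos using hslot
  obtain ⟨z, hz⟩ := Infinite.exists_notMem_finset D.X
  rw [← hE.1]
  exact ⟨D.expand hz hpos (fun S hS => hE.card_add_one hS) hE.2.2.1 hE.2.2.2⟩
end

section
/- For all integers c ≥ 1 and k ≥ 2, there exists a tight CSCCD(2c(k−1)+1, k, c²(2k−2)+c). -/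
open Finset

namespace CSCCD

section Development

variable {v c k n r : ℕ} {P : ℕ → Finset ℕ}

def develop (v c : ℕ) (P : ℕ → Finset ℕ) (i : ℕ) : Finset ℕ :=
  (P (i % c)).image fun t => (t + i / c) % v

lemma injOn_add_mod (v q : ℕ) : Set.InjOn (fun t => (t + q) % v) (range v) := by
  intro a ha b hb h
  simp only [coe_range, Set.mem_Iio] at ha hb
  simpa [Nat.ModEq, Nat.mod_eq_of_lt ha, Nat.mod_eq_of_lt hb] using
    Nat.ModEq.add_right_cancel' q h

lemma card_image_add_mod_inter {s t : Finset ℕ} (hs : s ⊆ range v) (ht : t ⊆ range v) (q : ℕ) :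
    #((s.image fun x => (x + q) % v) ∩ t.image fun x => (x + q) % v) = #(s ∩ t) := by
  have hst : (↑(s ∪ t) : Set ℕ) ⊆ range v := coe_subset.mpr (union_subset hs ht)
  rw [← image_inter_of_injOn _ _ ((injOn_add_mod v q).mono (by simpa using hst)),
    card_image_of_injOn ((injOn_add_mod v q).mono
      (subset_trans (coe_subset.mpr inter_subset_union) hst))]

lemma develop_mul_add (hr : r < c) (q : ℕ) :
    develop v c P (c * q + r) = (P r).image fun t => (t + q) % v := by
  rw [develop, Nat.mul_add_mod, Nat.mod_eq_of_lt hr, Nat.mul_add_div (by omega),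
    Nat.div_eq_of_lt hr, add_zero]

lemma develop_add_mul_self (i : ℕ) : develop v c P (i + c * v) = develop v c P i := by
  rcases Nat.eq_zero_or_pos c with rfl | hc
  · rw [zero_mul, add_zero]
  conv_lhs => rw [← Nat.div_add_mod i c, add_right_comm, ← mul_add,
    develop_mul_add (Nat.mod_lt i hc)]
  refine image_congr fun t _ => ?_
  simp only [← add_assoc, Nat.add_mod_right]

lemma develop_mul_add_self (hc : 0 < c) (q : ℕ) :
    develop v c P (c * q + c) = ((P 0).image (· + 1)).image fun t => (t + q) % v := by
  rw [← mul_add_one, ← add_zero (c * (q + 1)), develop_mul_add hc, image_image]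
  exact image_congr fun t _ => by simp only [Function.comp_apply, add_assoc, add_comm 1]

lemma card_develop (hc : 0 < c) (hsub : ∀ r < c, P r ⊆ range v) (hcard : ∀ r < c, #(P r) = k)
    (i : ℕ) : #(develop v c P i) = k := by
  have hr := Nat.mod_lt i hc
  rw [develop, card_image_of_injOn ((injOn_add_mod v _).mono (coe_subset.mpr (hsub _ hr))),
    hcard _ hr]

lemma card_develop_inter_succ (hc : 0 < c) (hsub : ∀ r < c, P r ⊆ range v)
    (hsucc : ∀ t ∈ P 0, t + 1 < v) (hinter : ∀ r, r + 1 < c → #(P r ∩ P (r + 1)) = n)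
    (hwrap : #(P (c - 1) ∩ (P 0).image (· + 1)) = n) (i : ℕ) :
    #(develop v c P i ∩ develop v c P (i + 1)) = n := by
  obtain ⟨q, r, hr, rfl⟩ : ∃ q r, r < c ∧ i = c * q + r :=
    ⟨i / c, i % c, Nat.mod_lt i hc, (Nat.div_add_mod i c).symm⟩
  rcases Nat.lt_or_ge (r + 1) c with hr1 | hr1
  · rw [add_assoc, develop_mul_add hr, develop_mul_add hr1,
      card_image_add_mod_inter (hsub r hr) (hsub _ hr1), hinter r hr1]
  · have hsub0 : (P 0).image (· + 1) ⊆ range v := by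
      simpa [subset_iff] using hsucc
    rw [add_assoc, show r + 1 = c by omega, develop_mul_add_self hc, develop_mul_add hr,
      card_image_add_mod_inter (hsub r hr) hsub0, show r = c - 1 by omega, hwrap]

lemma exists_develop_mem_of_add_mod (hsub : ∀ r < c, P r ⊆ range v) {t u d x : ℕ}
    (hr : r < c) (ht : t ∈ P r) (hu : u ∈ P r) (htu : (t + d) % v = u) (hx : x < v) :
    ∃ i < c * v, x ∈ develop v c P i ∧ (x + d) % v ∈ develop v c P i := by
  have htv : t < v := mem_range.mp (hsub r hr ht)
  set q := (x + v - t) % v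
  have hq : q < v := Nat.mod_lt _ (by omega)
  refine ⟨c * q + r, ?_, ?_⟩
  · calc c * q + r < c * (q + 1) := by rw [mul_add_one]; omega
      _ ≤ c * v := Nat.mul_le_mul_left c hq
  rw [develop_mul_add hr]
  refine ⟨mem_image.mpr ⟨t, ht, ?_⟩, mem_image.mpr ⟨u, hu, ?_⟩⟩
  · rw [Nat.add_mod_mod, show t + (x + v - t) = x + v by omega, Nat.add_mod_right,
      Nat.mod_eq_of_lt hx]
  · rw [← htu, Nat.mod_add_mod, Nat.add_mod_mod, show t + d + (x + v - t) = x + d + v by omega,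
      Nat.add_mod_right]

lemma develop_covers (hsub : ∀ r < c, P r ⊆ range v)
    (hdiff : ∀ d, 0 < d → d < v → ∃ r < c, ∃ t ∈ P r, ∃ u ∈ P r, (t + d) % v = u) :
    ∀ x ∈ range v, ∀ y ∈ range v, x ≠ y →
      ∃ i, i < c * v ∧ x ∈ develop v c P i ∧ y ∈ develop v c P i := by
  intro x hx y hy hxy
  wlog hlt : x < y generalizing x y
  · obtain ⟨i, hi, hyi, hxi⟩ := this y hy x hx hxy.symm (by omega)
    exact ⟨i, hi, hxi, hyi⟩
  rw [mem_range] at hx hy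
  obtain ⟨r, hr, t, ht, u, hu, htu⟩ := hdiff (y - x) (by omega) (by omega)
  obtain ⟨i, hi, hxi, hyi⟩ := exists_develop_mem_of_add_mod hsub hr ht hu htu hx
  rw [Nat.add_sub_cancel' hlt.le, Nat.mod_eq_of_lt hy] at hyi
  exact ⟨i, hi, hxi, hyi⟩

def ofBaseBlocks (hc : 0 < c) (hsub : ∀ r < c, P r ⊆ range v) (hcard : ∀ r < c, #(P r) = k)
    (hsucc : ∀ t ∈ P 0, t + 1 < v) (hinter : ∀ r, r + 1 < c → #(P r ∩ P (r + 1)) = k - 1)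
    (hwrap : #(P (c - 1) ∩ (P 0).image (· + 1)) = k - 1)
    (hdiff : ∀ d, 0 < d → d < v → ∃ r < c, ∃ t ∈ P r, ∃ u ∈ P r, (t + d) % v = u) :
    CSCCD v k (c * v) where
  X := range v
  B := develop v c P
  cardX := card_range v
  cardB i _ := card_develop hc hsub hcard i
  subX i hi := image_subset_iff.mpr fun _ _ =>
    mem_range.mpr (Nat.mod_lt _ (Nat.pos_of_mul_pos_left (Nat.zero_lt_of_lt hi)))
  singleChange i _ := card_develop_inter_succ hc hsub hsucc hinter hwrap i
  covers := develop_covers hsub hdiff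
  circ hb := by
    have h := card_develop_inter_succ hc hsub hsucc hinter hwrap (c * v - 1)
    rwa [Nat.sub_add_cancel hb, ← zero_add (c * v), develop_add_mul_self, zero_add] at h

end Development

section BaseBlocks

variable {m c : ℕ}

def baseBlock (m : ℕ) : ℕ → Finset ℕ
  | 0 => range (m + 1)
  | r + 1 => Icc 1 m ∪ {(r + 2) * m + 1}

lemma mem_baseBlock_succ {r a : ℕ} :
    a ∈ baseBlock m (r + 1) ↔ 1 ≤ a ∧ a ≤ m ∨ a = (r + 2) * m + 1 := by
  simp [baseBlock, or_comm]

lemma card_baseBlock (m r : ℕ) : #(baseBlock m r) = m + 1 := by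
  cases r with
  | zero => exact card_range _
  | succ r =>
    have : m < (r + 2) * m + 1 := by nlinarith
    rw [baseBlock, card_union_of_disjoint (by simp only [disjoint_singleton_right, mem_Icc]; omega), Nat.card_Icc, card_singleton]
    omega

lemma baseBlock_subset_range (hm : 0 < m) {r : ℕ} (hr : r < c) :
    baseBlock m r ⊆ range (2 * c * m + 1) := by
  cases r with
  | zero =>
    have : m ≤ c * m := Nat.le_mul_of_pos_left m (by omega)
    exact range_subset_range.mpr (by linarith)
  | succ r =>
    have : (r + 2) * m ≤ c * m := Nat.mul_le_mul_right m (by omega)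
    have : m ≤ (r + 2) * m := Nat.le_mul_of_pos_left m (by omega)
    intro a ha
    rw [mem_range]
    rcases mem_baseBlock_succ.mp ha with ⟨-, ha⟩ | rfl <;> linarith

lemma baseBlock_inter_succ (hm : 0 < m) (r : ℕ) :
    baseBlock m r ∩ baseBlock m (r + 1) = Icc 1 m := by
  ext a
  cases r with
  | zero => simp only [baseBlock, mem_inter, mem_range, mem_union, mem_Icc, mem_singleton]; omega
  | succ r =>
    have : (r + 1 + 2) * m = (r + 2) * m + m := by ring
    have : m ≤ (r + 2) * m := Nat.le_mul_of_pos_left m (by omega)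
    simp only [mem_inter, mem_baseBlock_succ, mem_Icc]
    omega

lemma baseBlock_inter_image_succ (hm : 0 < m) (r : ℕ) :
    baseBlock m r ∩ (baseBlock m 0).image (· + 1) = Icc 1 m := by
  rw [baseBlock, range_eq_Ico, image_add_right_Ico]
  ext a
  cases r with
  | zero => simp only [baseBlock, range_eq_Ico, mem_inter, mem_Ico, mem_Icc]; omega
  | succ r =>
    have : (r + 2) * m ≥ 2 * m := Nat.mul_le_mul_right m (by omega)
    simp only [mem_inter, mem_baseBlock_succ, mem_Ico, mem_Icc]
    omega

lemma exists_add_mem_baseBlock {d : ℕ} (hd : 0 < d) (hdc : d ≤ c * m) :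
    ∃ r < c, ∃ t ∈ baseBlock m r, t + d ∈ baseBlock m r := by
  have hm : 0 < m := Nat.pos_of_mul_pos_left (by omega : 0 < c * m)
  obtain ⟨q, e, he, hde, hqc⟩ : ∃ q e, e < m ∧ d = m * q + e + 1 ∧ q < c :=
    ⟨(d - 1) / m, (d - 1) % m, Nat.mod_lt _ hm, by rw [Nat.div_add_mod]; omega,
      (Nat.div_lt_iff_lt_mul hm).mpr (by omega)⟩
  cases q with
  | zero => exact ⟨0, by omega, 0, by simp [baseBlock], by simp only [baseBlock, zero_add, mem_range]; omega⟩
  | succ q =>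
    have : (q + 2) * m = m * (q + 1) + m := by ring
    refine ⟨q + 1, hqc, m - e, mem_baseBlock_succ.mpr (Or.inl (by omega)),
      mem_baseBlock_succ.mpr (Or.inr (by omega))⟩

lemma exists_baseBlock_add_mod (hm : 0 < m) {d : ℕ} (hd : 0 < d) (hdv : d < 2 * c * m + 1) :
    ∃ r < c, ∃ t ∈ baseBlock m r, ∃ u ∈ baseBlock m r, (t + d) % (2 * c * m + 1) = u := by
  have hv : 2 * c * m = 2 * (c * m) := mul_assoc 2 c m
  rcases le_or_gt d (c * m) with hdc | hdc
  · obtain ⟨r, hr, t, ht, htd⟩ := exists_add_mem_baseBlock hd hdc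
    exact ⟨r, hr, t, ht, t + d, htd,
      Nat.mod_eq_of_lt (mem_range.mp (baseBlock_subset_range hm hr htd))⟩
  · -- `d` is realised backwards, as the difference `v - d ≤ c * m`
    obtain ⟨r, hr, t, ht, htd⟩ :=
      exists_add_mem_baseBlock (c := c) (m := m) (d := 2 * c * m + 1 - d) (by omega) (by omega)
    refine ⟨r, hr, _, htd, t, ht, ?_⟩
    rw [add_assoc, Nat.sub_add_cancel hdv.le, Nat.add_mod_right,
      Nat.mod_eq_of_lt (mem_range.mp (baseBlock_subset_range hm hr ht))]

def cyclicDesign (hc : 0 < c) (hm : 0 < m) :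
    CSCCD (2 * c * m + 1) (m + 1) (c * (2 * c * m + 1)) :=
  ofBaseBlocks hc (fun _ => baseBlock_subset_range hm) (fun r _ => card_baseBlock m r)
    (fun t ht => by
      have : m ≤ c * m := Nat.le_mul_of_pos_left m hc
      have : 2 * c * m = 2 * (c * m) := mul_assoc 2 c m
      simp only [baseBlock, mem_range] at ht
      omega)
    (fun r _ => by rw [baseBlock_inter_succ hm, Nat.card_Icc])
    (by rw [baseBlock_inter_image_succ hm, Nat.card_Icc])
    (fun _ hd hdv => exists_baseBlock_add_mod hm hd hdv)

end BaseBlocks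

lemma tightCirc_two_mul_mul_add_one (c : ℕ) {m : ℕ} (hm : 0 < m) :
    TightCirc (2 * c * m + 1) (m + 1) (c * (2 * c * m + 1)) := by
  have hchoose : (2 * c * m + 1).choose 2 = c * (2 * c * m + 1) * m := by
    rw [Nat.choose_two_right, Nat.add_sub_cancel,
      show (2 * c * m + 1) * (2 * c * m) = 2 * (c * (2 * c * m + 1) * m) by ring,
      Nat.mul_div_cancel_left _ two_pos]
  have hm' : (m : ℚ) ≠ 0 := by positivity
  rw [TightCirc, g2, hchoose]
  push_cast
  rw [add_sub_cancel_right, mul_div_cancel_right₀ _ hm']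

end CSCCD

/-- For all `c ≥ 1` and `k ≥ 2` there exists a tight
`CSCCD(2c(k−1)+1, k, c²(2k−2)+c)`. -/
theorem stmt14 (c k : ℕ) (hc : 1 ≤ c) (hk : 2 ≤ k) :
    ∃ _D : CSCCD (2 * c * (k - 1) + 1) k (c ^ 2 * (2 * k - 2) + c),
      TightCirc (2 * c * (k - 1) + 1) k (c ^ 2 * (2 * k - 2) + c) := by
  obtain ⟨m, rfl⟩ : ∃ m, k = m + 1 := ⟨k - 1, by omega⟩
  have hb : c ^ 2 * (2 * (m + 1) - 2) + c = c * (2 * c * m + 1) := by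
    rw [show 2 * (m + 1) - 2 = 2 * m by omega]
    ring
  rw [Nat.add_sub_cancel, hb]
  exact ⟨CSCCD.cyclicDesign hc (by omega), CSCCD.tightCirc_two_mul_mul_add_one c (by omega)⟩
end
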